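/- arXiv:1701.02119 — 8 statements merged into one kernel-verified Lean document; each statement's English description precedes it below -/
import Mathlib

section
/- Let W: X → Y be a DMC with fixed input distribution P_X (all π(x) > 0, all π(y) > 0), let y_a, y_b ∈ Y be distinct, and let x ∈ X. Then ΔI_x := π_ab η(γ_x) − π_a η(α_x) − π_b η(β_x) satisfies ΔI_x ≤ (π_a + π_b) · |β_x − α_x|. -/
open scoped BigOperators

/-- `η(p) = -p ln p` (equals `0` at `p = 0` since `Real.log 0 = 0`). -/
noncomputable def eta (p : ℝ) : ℝ := -p * Real.log p

/-- Output distribution `π(y) = ∑ x, π(x) W(y|x)`. -/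
noncomputable def outDist {X Y : Type} [Fintype X] (pX : X → ℝ) (W : X → Y → ℝ) (y : Y) : ℝ :=
  ∑ x, pX x * W x y

/-- Posterior probability `W(x|y) = π(x) W(y|x) / π(y)`. -/
noncomputable def post {X Y : Type} [Fintype X] (pX : X → ℝ) (W : X → Y → ℝ) (x : X) (y : Y) : ℝ :=
  pX x * W x y / outDist pX W y

/-!
Writing `g` for the mixture `(p a + q b) / (p + q)`, the entropy gap
`(p + q) η(g) - p η(a) - q η(b)` equals `p a ln (a / g) + q b ln (b / g)`, a weighted
Kullback–Leibler divergence. Bounding it by the χ²-divergence via `ln u ≤ u - 1` gives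
`p q (a - b)² / (p a + q b)`, and `p q |a - b| ≤ p q (a + b) ≤ (p + q) (p a + q b)`.
-/

open Real

lemma eta_mix_sub_eq {p q a b g : ℝ} (hg : (p + q) * g = p * a + q * b) :
    (p + q) * eta g - p * eta a - q * eta b =
      p * (a * (log a - log g)) + q * (b * (log b - log g)) := by
  simp only [eta]
  linear_combination (-log g) * hg

lemma mul_log_sub_log_le {t g : ℝ} (ht : 0 ≤ t) (hg : 0 < g) :
    t * (log t - log g) ≤ t * (t - g) / g := by
  rcases ht.eq_or_lt with rfl | ht
  · simp
  have hlog : log (t / g) ≤ t / g - 1 := log_le_sub_one_of_pos (by positivity)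
  rw [log_div ht.ne' hg.ne'] at hlog
  calc t * (log t - log g) ≤ t * (t / g - 1) := by gcongr
    _ = t * (t - g) / g := by field_simp

lemma mul_add_mul_sub_eq {p q a b g : ℝ} (hg : (p + q) * g = p * a + q * b) :
    (p + q) * (p * a * (a - g) + q * b * (b - g)) = p * q * (a - b) ^ 2 := by
  linear_combination (-(p * a + q * b)) * hg

lemma mul_mul_sub_sq_le {p q a b : ℝ} (hp : 0 ≤ p) (hq : 0 ≤ q) (ha : 0 ≤ a) (hb : 0 ≤ b) :
    p * q * (a - b) ^ 2 ≤ (p + q) * |b - a| * (p * a + q * b) := by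
  have hsq : (a - b) ^ 2 ≤ |b - a| * (a + b) := by
    rw [← sq_abs, sq, abs_sub_comm a b]
    gcongr
    exact abs_sub_le_of_nonneg_of_le hb (le_add_of_nonneg_left ha) ha (le_add_of_nonneg_right hb)
  have hmix : p * q * (a + b) ≤ (p + q) * (p * a + q * b) := by
    nlinarith [mul_nonneg (mul_nonneg hp hp) ha, mul_nonneg (mul_nonneg hq hq) hb]
  calc p * q * (a - b) ^ 2 ≤ p * q * (|b - a| * (a + b)) := by gcongr
    _ = |b - a| * (p * q * (a + b)) := by ring
    _ ≤ |b - a| * ((p + q) * (p * a + q * b)) := by gcongr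
    _ = (p + q) * |b - a| * (p * a + q * b) := by ring

lemma eta_mix_sub_le {p q a b : ℝ} (hp : 0 < p) (hq : 0 < q) (ha : 0 ≤ a) (hb : 0 ≤ b) :
    (p + q) * eta ((p * a + q * b) / (p + q)) - p * eta a - q * eta b ≤ (p + q) * |b - a| := by
  set g := (p * a + q * b) / (p + q)
  have hpq : 0 < p + q := add_pos hp hq
  have hg : (p + q) * g = p * a + q * b := mul_div_cancel₀ _ hpq.ne'
  rcases (show 0 ≤ p * a + q * b by positivity).eq_or_lt with hzero | hpos
  · have ha0 : a = 0 := by nlinarith [mul_nonneg hq.le hb]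
    have hb0 : b = 0 := by nlinarith [mul_nonneg hp.le ha]
    simp [g, eta, ha0, hb0]
  have hg0 : 0 < g := by positivity
  rw [eta_mix_sub_eq hg]
  calc p * (a * (log a - log g)) + q * (b * (log b - log g))
      ≤ p * (a * (a - g) / g) + q * (b * (b - g) / g) := by
        gcongr
        · exact mul_log_sub_log_le ha hg0
        · exact mul_log_sub_log_le hb hg0
    _ = (p + q) * (p * a * (a - g) + q * b * (b - g)) / ((p + q) * g) := by
        field_simp
    _ = p * q * (a - b) ^ 2 / (p * a + q * b) := by rw [mul_add_mul_sub_eq hg, hg]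
    _ ≤ (p + q) * |b - a| := by
        rw [div_le_iff₀ hpos]
        exact mul_mul_sub_sq_le hp.le hq.le ha hb

lemma post_nonneg {X Y : Type} [Fintype X] {pX : X → ℝ} {W : X → Y → ℝ}
    (hW0 : ∀ x y, 0 ≤ W x y) (hpX : ∀ x, 0 ≤ pX x) (hpY : ∀ y, 0 < outDist pX W y)
    (x : X) (y : Y) : 0 ≤ post pX W x y :=
  div_nonneg (mul_nonneg (hpX x) (hW0 x y)) (hpY y).le

theorem deltaIx_le_d1_general {X Y : Type} [Fintype X]
    (pX : X → ℝ) (W : X → Y → ℝ)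
    (hW0 : ∀ x y, 0 ≤ W x y)
    (hpX : ∀ x, 0 < pX x)
    (hpY : ∀ y, 0 < outDist pX W y)
    (ya yb : Y) (x : X)
    (pa pb ax bx gx : ℝ)
    (hpa : pa = outDist pX W ya) (hpb : pb = outDist pX W yb)
    (hax : ax = post pX W x ya) (hbx : bx = post pX W x yb)
    (hgx : gx = (pa * ax + pb * bx) / (pa + pb)) :
    (pa + pb) * eta gx - pa * eta ax - pb * eta bx ≤ (pa + pb) * |bx - ax| := by
  have hpost := post_nonneg hW0 (fun x => (hpX x).le) hpY x
  subst hpa hpb hax hbx hgx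
  exact eta_mix_sub_le (hpY ya) (hpY yb) (hpost ya) (hpost yb)

/-- First bound on `ΔI_x`: `ΔI_x ≤ (π_a + π_b) |β_x - α_x|`. -/
theorem deltaIx_le_d1 {X Y : Type} [Fintype X] [Fintype Y]
    (pX : X → ℝ) (W : X → Y → ℝ)
    (hW0 : ∀ x y, 0 ≤ W x y) (hW1 : ∀ x, ∑ y, W x y = 1)
    (hpX : ∀ x, 0 < pX x) (hpXsum : ∑ x, pX x = 1)
    (hpY : ∀ y, 0 < outDist pX W y)
    (ya yb : Y) (hab : ya ≠ yb) (x : X)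
    (pa pb ax bx gx : ℝ)
    (hpa : pa = outDist pX W ya) (hpb : pb = outDist pX W yb)
    (hax : ax = post pX W x ya) (hbx : bx = post pX W x yb)
    (hgx : gx = (pa * ax + pb * bx) / (pa + pb)) :
    (pa + pb) * eta gx - pa * eta ax - pb * eta bx ≤ (pa + pb) * |bx - ax| :=
  deltaIx_le_d1_general pX W hW0 hpX hpY ya yb x pa pb ax bx gx hpa hpb hax hbx hgx
end

section
/- Let W: X → Y be a DMC with fixed input distribution P_X (all π(x) > 0, all π(y) > 0), let y_a, y_b ∈ Y be distinct, and let x ∈ X be such that α_x > 0 and β_x > 0. Then ΔI_x := π_ab η(γ_x) − π_a η(α_x) − π_b η(β_x) satisfies ΔI_x ≤ (π_a + π_b) · (α_x − β_x)² / min(α_x, β_x). -/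
/-! Since `η` is concave, `η(γ)` lies below the tangent lines of `η` at `α` and at `β`. Averaging
these two bounds with weights `π_a`, `π_b` cancels everything except
`π_a π_b / (π_a + π_b) · (β - α)(ln β - ln α)`, because `π_a (γ - α) + π_b (γ - β) = 0`. Finally
`ln t ≤ t - 1` bounds `(β - α)(ln β - ln α)` by `(α - β)² / min(α, β)`, and
`π_a π_b / (π_a + π_b) ≤ π_a + π_b`. -/

open scoped BigOperators

open Real

lemma eta_le_tangent {a g : ℝ} (ha : 0 < a) (hg : 0 < g) :
    eta g ≤ eta a - (log a + 1) * (g - a) := by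
  have hlog := log_le_sub_one_of_pos (div_pos ha hg)
  rw [log_div ha.ne' hg.ne'] at hlog
  have key : g * (log a - log g) ≤ a - g :=
    calc g * (log a - log g) ≤ g * (a / g - 1) := mul_le_mul_of_nonneg_left hlog hg.le
      _ = a - g := by field_simp
  unfold eta
  linarith

lemma sub_mul_log_sub_log_le_sq_div_min {a b : ℝ} (ha : 0 < a) (hb : 0 < b) :
    (b - a) * (log b - log a) ≤ (a - b) ^ 2 / min a b := by
  wlog hab : a ≤ b generalizing a b
  · rw [min_comm]
    convert this hb ha (le_of_not_ge hab) using 1 <;> ring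
  have hlog := log_le_sub_one_of_pos (div_pos hb ha)
  rw [log_div hb.ne' ha.ne'] at hlog
  calc (b - a) * (log b - log a) ≤ (b - a) * (b / a - 1) :=
        mul_le_mul_of_nonneg_left hlog (sub_nonneg.2 hab)
    _ = (a - b) ^ 2 / min a b := by rw [min_eq_left hab]; field_simp; ring

lemma weighted_eta_gap_le {pa pb a b : ℝ} (hpa : 0 < pa) (hpb : 0 < pb) (ha : 0 < a)
    (hb : 0 < b) :
    (pa + pb) * eta ((pa * a + pb * b) / (pa + pb)) - pa * eta a - pb * eta b ≤
      pa * pb / (pa + pb) * ((b - a) * (log b - log a)) := by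
  set g := (pa * a + pb * b) / (pa + pb) with hg
  have hpab : 0 < pa + pb := add_pos hpa hpb
  have hg0 : 0 < g := by positivity
  have hga : pa * (g - a) = pa * pb / (pa + pb) * (b - a) := by rw [hg]; field_simp; ring
  have hgb : pb * (g - b) = pa * pb / (pa + pb) * (a - b) := by rw [hg]; field_simp; ring
  have ta := mul_le_mul_of_nonneg_left (eta_le_tangent ha hg0) hpa.le
  have tb := mul_le_mul_of_nonneg_left (eta_le_tangent hb hg0) hpb.le
  linear_combination ta + tb - (log a + 1) * hga - (log b + 1) * hgb

lemma weighted_eta_gap_le_sq_div_min {pa pb a b : ℝ} (hpa : 0 < pa) (hpb : 0 < pb)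
    (ha : 0 < a) (hb : 0 < b) :
    (pa + pb) * eta ((pa * a + pb * b) / (pa + pb)) - pa * eta a - pb * eta b ≤
      (pa + pb) * ((a - b) ^ 2 / min a b) := by
  have hpab : 0 < pa + pb := add_pos hpa hpb
  have hweight : pa * pb / (pa + pb) ≤ pa + pb := by
    rw [div_le_iff₀ hpab]; nlinarith
  have hmin : 0 < min a b := lt_min ha hb
  calc _ ≤ pa * pb / (pa + pb) * ((b - a) * (log b - log a)) :=
        weighted_eta_gap_le hpa hpb ha hb
    _ ≤ pa * pb / (pa + pb) * ((a - b) ^ 2 / min a b) := by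
        gcongr; exact sub_mul_log_sub_log_le_sq_div_min ha hb
    _ ≤ (pa + pb) * ((a - b) ^ 2 / min a b) := by gcongr

theorem deltaIx_le_d2_general {X Y : Type} [Fintype X]
    (pX : X → ℝ) (W : X → Y → ℝ)
    (hpY : ∀ y, 0 < outDist pX W y)
    (ya yb : Y)
    (pa pb ax bx gx : ℝ)
    (hpa : pa = outDist pX W ya) (hpb : pb = outDist pX W yb)
    (hax0 : 0 < ax) (hbx0 : 0 < bx)
    (hgx : gx = (pa * ax + pb * bx) / (pa + pb)) :
    (pa + pb) * eta gx - pa * eta ax - pb * eta bx ≤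
      (pa + pb) * ((ax - bx) ^ 2 / min ax bx) := by
  subst hgx
  exact weighted_eta_gap_le_sq_div_min (hpa ▸ hpY ya) (hpb ▸ hpY yb) hax0 hbx0

/-- Second bound on `ΔI_x`: if `α_x, β_x > 0` then
`ΔI_x ≤ (π_a + π_b) (α_x - β_x)² / min (α_x, β_x)`. -/
theorem deltaIx_le_d2 {X Y : Type} [Fintype X] [Fintype Y]
    (pX : X → ℝ) (W : X → Y → ℝ)
    (hW0 : ∀ x y, 0 ≤ W x y) (hW1 : ∀ x, ∑ y, W x y = 1)
    (hpX : ∀ x, 0 < pX x) (hpXsum : ∑ x, pX x = 1)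
    (hpY : ∀ y, 0 < outDist pX W y)
    (ya yb : Y) (hab : ya ≠ yb) (x : X)
    (pa pb ax bx gx : ℝ)
    (hpa : pa = outDist pX W ya) (hpb : pb = outDist pX W yb)
    (hax : ax = post pX W x ya) (hbx : bx = post pX W x yb)
    (hax0 : 0 < ax) (hbx0 : 0 < bx)
    (hgx : gx = (pa * ax + pb * bx) / (pa + pb)) :
    (pa + pb) * eta gx - pa * eta ax - pb * eta bx ≤
      (pa + pb) * ((ax - bx) ^ 2 / min ax bx) :=
  deltaIx_le_d2_general pX W hpY ya yb pa pb ax bx gx hpa hpb hax0 hbx0 hgx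
end

section
/- Let W: X → Y be a DMC with fixed input distribution P_X (all π(x) > 0, all π(y) > 0), let y_a, y_b ∈ Y be distinct, and let Q be their merger with ΔI := I(W,P_X) − I(Q,P_X). Then ΔI ≤ (π_a + π_b) · |X| · d(α, β), where α = (α_x)_{x∈X} and β = (β_x)_{x∈X} are the posterior vectors of y_a and y_b. -/
open scoped BigOperators

/-- Mutual information `I(W, P_X) = ∑ x, η(π(x)) - ∑ x y, π(y) η(W(x|y))`. -/
noncomputable def mutInfo {X Y : Type} [Fintype X] [Fintype Y]
    (pX : X → ℝ) (W : X → Y → ℝ) : ℝ :=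
  (∑ x, eta (pX x)) - ∑ x, ∑ y, outDist pX W y * eta (post pX W x y)

/-- The merger of output letters `ya` and `yb`: the new output alphabet is
`Option {y // y ≠ ya ∧ y ≠ yb}`, with `none` playing the role of the merged letter `y_ab`. -/
noncomputable def merger {X Y : Type} [DecidableEq Y] (W : X → Y → ℝ) (ya yb : Y) (x : X) :
    Option {y : Y // y ≠ ya ∧ y ≠ yb} → ℝ
  | none => W x ya + W x yb
  | some y => W x y.1

/-- The scalar "distance" `d(α,ζ) = min (d₁(α,ζ), d₂(α,ζ))` where `d₁(α,ζ) = |ζ - α|` and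
`d₂(α,ζ) = (ζ-α)²/min(α,ζ)` if `α,ζ > 0` and `∞` otherwise (so the `min` collapses to `d₁`
in that case). -/
noncomputable def dSc (a z : ℝ) : ℝ :=
  if 0 < a ∧ 0 < z then min |z - a| ((z - a) ^ 2 / min a z) else |z - a|

/-- The vector "distance" `d(α,β) = max_{x ∈ X} d(α_x, β_x)`. -/
noncomputable def dVec {X : Type} [Fintype X] [Nonempty X] (a b : X → ℝ) : ℝ :=
  Finset.univ.sup' Finset.univ_nonempty fun x => dSc (a x) (b x)

/-!
Merging `y_a` and `y_b` only changes the terms of `I` that belong to these two letters, so `ΔI`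
is a sum over `x` of the Jensen gaps `(π_a + π_b) η(γ_x) - π_a η(α_x) - π_b η(β_x)` of the concave
function `η` at the mixture `γ_x = (π_a α_x + π_b β_x)/(π_a + π_b)`, which is the posterior of
`y_ab`. Writing the gap as `π_a α_x ln(α_x/γ_x) + π_b β_x ln(β_x/γ_x)` and using `ln t ≤ t - 1`
bounds it by the χ²-type quantity `π_a π_b (α_x - β_x)² / (π_a α_x + π_b β_x)`, which is at most
`(π_a + π_b) |α_x - β_x|` and, when both posteriors are positive, at most
`(π_a + π_b) (α_x - β_x)² / min(α_x, β_x)`.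
-/

lemma mul_log_sub_log_le_s5 (α γ : ℝ) (hα : 0 ≤ α) (hγ : 0 < γ) :
    α * (Real.log α - Real.log γ) ≤ α * (α - γ) / γ := by
  rcases hα.eq_or_lt with rfl | hα
  · simp
  have hlog : Real.log (α / γ) ≤ α / γ - 1 := Real.log_le_sub_one_of_pos (by positivity)
  rw [Real.log_div hα.ne' hγ.ne'] at hlog
  calc α * (Real.log α - Real.log γ) ≤ α * (α / γ - 1) := mul_le_mul_of_nonneg_left hlog hα.le
    _ = α * (α - γ) / γ := by field_simp

section JensenGap

variable {pa pb α β : ℝ}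

lemma eta_mix_gap_le_chiSq (ha : 0 < pa) (hb : 0 < pb) (hα : 0 ≤ α) (hβ : 0 ≤ β)
    (hs : 0 < pa * α + pb * β) :
    (pa + pb) * eta ((pa * α + pb * β) / (pa + pb)) - pa * eta α - pb * eta β ≤
      pa * pb * (α - β) ^ 2 / (pa * α + pb * β) := by
  set γ := (pa * α + pb * β) / (pa + pb) with hγ_def
  have hγ : 0 < γ := by positivity
  have hmass : (pa + pb) * γ = pa * α + pb * β := by rw [hγ_def]; field_simp
  have hgap : (pa + pb) * eta γ - pa * eta α - pb * eta β =
      pa * (α * (Real.log α - Real.log γ)) + pb * (β * (Real.log β - Real.log γ)) := by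
    have : (pa + pb) * eta γ = -(pa * α + pb * β) * Real.log γ := by rw [eta, ← hmass]; ring
    rw [this, eta, eta]; ring
  have hchi : pa * (α * (α - γ) / γ) + pb * (β * (β - γ) / γ) =
      pa * pb * (α - β) ^ 2 / (pa * α + pb * β) := by
    rw [hγ_def]; field_simp; ring
  rw [hgap, ← hchi]
  gcongr
  · exact mul_log_sub_log_le_s5 α γ hα hγ
  · exact mul_log_sub_log_le_s5 β γ hβ hγ

lemma chiSq_le_mul_abs_sub (ha : 0 < pa) (hb : 0 < pb) (hα : 0 ≤ α) (hβ : 0 ≤ β)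
    (hs : 0 < pa * α + pb * β) :
    pa * pb * (α - β) ^ 2 / (pa * α + pb * β) ≤ (pa + pb) * |β - α| := by
  rw [div_le_iff₀ hs]
  rcases abs_cases (β - α) with ⟨h, hle⟩ | ⟨h, hlt⟩ <;> rw [h] <;>
    nlinarith [mul_pos ha hb, mul_nonneg (mul_nonneg ha.le hb.le) hα,
      mul_nonneg (mul_nonneg ha.le hb.le) hβ, mul_nonneg (mul_nonneg ha.le ha.le) hα,
      mul_nonneg (mul_nonneg hb.le hb.le) hβ]

lemma chiSq_le_mul_sq_div_min (ha : 0 < pa) (hb : 0 < pb) (hα : 0 < α) (hβ : 0 < β) :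
    pa * pb * (α - β) ^ 2 / (pa * α + pb * β) ≤ (pa + pb) * ((β - α) ^ 2 / min α β) := by
  have hm : 0 < min α β := lt_min hα hβ
  have hmass : (pa + pb) * min α β ≤ pa * α + pb * β := by
    nlinarith [min_le_left α β, min_le_right α β]
  have hweights : pa * pb ≤ (pa + pb) ^ 2 := by nlinarith
  rw [div_le_iff₀ (by positivity), mul_div_assoc', div_mul_eq_mul_div, le_div_iff₀ hm]
  calc pa * pb * (α - β) ^ 2 * min α β ≤ (pa + pb) ^ 2 * (α - β) ^ 2 * min α β := by gcongr
    _ = (pa + pb) * (β - α) ^ 2 * ((pa + pb) * min α β) := by ring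
    _ ≤ (pa + pb) * (β - α) ^ 2 * (pa * α + pb * β) := by gcongr

lemma eta_mix_gap_le_dSc (ha : 0 < pa) (hb : 0 < pb) (hα : 0 ≤ α) (hβ : 0 ≤ β) :
    (pa + pb) * eta ((pa * α + pb * β) / (pa + pb)) - pa * eta α - pb * eta β ≤
      (pa + pb) * dSc α β := by
  rcases (add_nonneg (mul_nonneg ha.le hα) (mul_nonneg hb.le hβ)).eq_or_lt with hs | hs
  · have hα0 : α = 0 := by nlinarith
    have hβ0 : β = 0 := by nlinarith
    simp [hα0, hβ0, eta, dSc]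
  refine (eta_mix_gap_le_chiSq ha hb hα hβ hs).trans ?_
  have habs := chiSq_le_mul_abs_sub ha hb hα hβ hs
  unfold dSc
  split_ifs with hpos
  · rw [mul_min_of_nonneg _ _ (by positivity)]
    exact le_min habs (chiSq_le_mul_sq_div_min ha hb hpos.1 hpos.2)
  · exact habs

end JensenGap

lemma sum_eq_add_add_sum_subtype_ne {Y M : Type*} [Fintype Y] [DecidableEq Y] [AddCommMonoid M]
    (f : Y → M) {ya yb : Y} (hab : ya ≠ yb) :
    ∑ y, f y = f ya + f yb + ∑ z : {y : Y // y ≠ ya ∧ y ≠ yb}, f z.1 := by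
  rw [← Finset.sum_subtype (Finset.univ.filter fun y => y ≠ ya ∧ y ≠ yb) (by simp),
    ← Finset.sum_pair hab, ← Finset.sum_union]
  · congr 1
    ext y
    by_cases y = ya <;> by_cases y = yb <;> simp_all
  · simp [Finset.disjoint_left]

section Merger

variable {X Y : Type} [Fintype X] [DecidableEq Y] (pX : X → ℝ) (W : X → Y → ℝ)
  {ya yb : Y}

lemma outDist_merger_none :
    outDist pX (merger W ya yb) none = outDist pX W ya + outDist pX W yb := by
  simp only [outDist, merger, mul_add, Finset.sum_add_distrib]

lemma outDist_merger_some (z : {y : Y // y ≠ ya ∧ y ≠ yb}) :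
    outDist pX (merger W ya yb) (some z) = outDist pX W z.1 := rfl

lemma post_merger_some (x : X) (z : {y : Y // y ≠ ya ∧ y ≠ yb}) :
    post pX (merger W ya yb) x (some z) = post pX W x z.1 := rfl

lemma post_merger_none (x : X) (ha : outDist pX W ya ≠ 0) (hb : outDist pX W yb ≠ 0) :
    post pX (merger W ya yb) x none =
      (outDist pX W ya * post pX W x ya + outDist pX W yb * post pX W x yb) /
        (outDist pX W ya + outDist pX W yb) := by
  rw [post, outDist_merger_none, post, post, mul_div_cancel₀ _ ha, mul_div_cancel₀ _ hb, merger,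
    mul_add]

lemma mutInfo_sub_mutInfo_merger [Fintype Y] (hab : ya ≠ yb) :
    mutInfo pX W - mutInfo pX (merger W ya yb) =
      ∑ x, ((outDist pX W ya + outDist pX W yb) * eta (post pX (merger W ya yb) x none) -
        outDist pX W ya * eta (post pX W x ya) - outDist pX W yb * eta (post pX W x yb)) := by
  simp only [mutInfo, Fintype.sum_option, outDist_merger_none, outDist_merger_some,
    post_merger_some, sum_eq_add_add_sum_subtype_ne _ hab, ← Finset.sum_sub_distrib]
  refine Finset.sum_congr rfl fun x _ => ?_
  ring

end Merger

theorem deltaI_le_d_general {X Y : Type} [Fintype X] [Nonempty X] [Fintype Y] [DecidableEq Y]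
    (pX : X → ℝ) (W : X → Y → ℝ)
    (hW0 : ∀ x y, 0 ≤ W x y)
    (hpX : ∀ x, 0 < pX x)
    (hpY : ∀ y, 0 < outDist pX W y)
    (ya yb : Y) (hab : ya ≠ yb) :
    mutInfo pX W - mutInfo pX (merger W ya yb) ≤
      (outDist pX W ya + outDist pX W yb) * (Fintype.card X : ℝ) *
        dVec (fun x => post pX W x ya) (fun x => post pX W x yb) := by
  set D := dVec (fun x => post pX W x ya) (fun x => post pX W x yb)
  have hpost : ∀ x y, 0 ≤ post pX W x y := fun x y =>
    div_nonneg (mul_nonneg (hpX x).le (hW0 x y)) (hpY y).le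
  rw [mutInfo_sub_mutInfo_merger pX W hab]
  calc _ ≤ ∑ _x : X, (outDist pX W ya + outDist pX W yb) * D := by
        refine Finset.sum_le_sum fun x _ => ?_
        rw [post_merger_none pX W x (hpY ya).ne' (hpY yb).ne']
        refine (eta_mix_gap_le_dSc (hpY ya) (hpY yb) (hpost x ya) (hpost x yb)).trans ?_
        gcongr
        · exact add_nonneg (hpY ya).le (hpY yb).le
        · exact Finset.le_sup' (fun x => dSc (post pX W x ya) (post pX W x yb)) (Finset.mem_univ x)
    _ = (outDist pX W ya + outDist pX W yb) * (Fintype.card X : ℝ) * D := by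
        rw [Finset.sum_const, Finset.card_univ, nsmul_eq_mul]; ring

/-- `ΔI ≤ (π_a + π_b) |X| d(α, β)` for the merger of `ya` and `yb`. -/
theorem deltaI_le_d {X Y : Type} [Fintype X] [Nonempty X] [Fintype Y] [DecidableEq Y]
    (pX : X → ℝ) (W : X → Y → ℝ)
    (hW0 : ∀ x y, 0 ≤ W x y) (hW1 : ∀ x, ∑ y, W x y = 1)
    (hpX : ∀ x, 0 < pX x) (hpXsum : ∑ x, pX x = 1)
    (hpY : ∀ y, 0 < outDist pX W y)
    (ya yb : Y) (hab : ya ≠ yb) :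
    mutInfo pX W - mutInfo pX (merger W ya yb) ≤
      (outDist pX W ya + outDist pX W yb) * (Fintype.card X : ℝ) *
        dVec (fun x => post pX W x ya) (fun x => post pX W x yb) :=
  deltaI_le_d_general pX W hW0 hpX hpY ya yb hab
end

section
/- Let α ≥ 0 and r > 0, and define B(α,r) := {ζ ∈ ℝ : d(α,ζ) ≤ r}. Then B(α,r) = {ζ ∈ ℝ : −ω↓(α,r) ≤ ζ − α ≤ ω↑(α,r)}, where ω↓(α,r) := max(√(r²/4 + αr) − r/2, r) and ω↑(α,r) := max(√(αr), r). -/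
/-- `ω↓(α,r) = max (√(r²/4 + αr) - r/2, r)`. -/
noncomputable def omegaDown (a r : ℝ) : ℝ :=
  max (Real.sqrt (r ^ 2 / 4 + a * r) - r / 2) r

/-- `ω↑(α,r) = max (√(αr), r)`. -/
noncomputable def omegaUp (a r : ℝ) : ℝ :=
  max (Real.sqrt (a * r)) r

/-!
Put `t = |ζ - α|`. Besides the points with `t ≤ r`, the ball contains those with
`(ζ - α)² ≤ r · min(α,ζ)`: above `α` this reads `t² ≤ αr`, i.e. `t ≤ √(αr)`, and below `α` it
reads `t² ≤ r(α - t)`, i.e. `t ≤ √(r²/4 + αr) - r/2` by completing the square. When `t > r`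
either inequality forces `α, ζ > 0`, so the positivity condition in the definition of `d` is
automatic.
-/

lemma dSc_le_iff (a z r : ℝ) :
    dSc a z ≤ r ↔ |z - a| ≤ r ∨ (0 < a ∧ 0 < z ∧ (z - a) ^ 2 ≤ r * min a z) := by
  unfold dSc
  split_ifs with h
  · rw [min_le_iff, div_le_iff₀ (lt_min h.1 h.2), mul_comm]
    simp only [h, true_and]
  · exact ⟨Or.inl, fun h' ↦ h'.resolve_right fun ⟨ha, hz, _⟩ ↦ h ⟨ha, hz⟩⟩

lemma le_sqrt_sub_half_iff {a r t : ℝ} (ha : 0 ≤ a) (hr : 0 ≤ r) (ht : 0 ≤ t) :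
    t ≤ √(r ^ 2 / 4 + a * r) - r / 2 ↔ t ^ 2 ≤ r * (a - t) := by
  have hsq : (t + r / 2) ^ 2 = t ^ 2 + r * t + r ^ 2 / 4 := by ring
  rw [le_sub_iff_add_le, Real.le_sqrt (by positivity) (by positivity), hsq]
  constructor <;> intro h <;> linarith

lemma le_omegaDown_iff {a r t : ℝ} (ha : 0 ≤ a) (hr : 0 ≤ r) (ht : 0 ≤ t) :
    t ≤ omegaDown a r ↔ t ≤ r ∨ t ^ 2 ≤ r * (a - t) := by
  rw [omegaDown, le_max_iff, le_sqrt_sub_half_iff ha hr ht, or_comm]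

lemma le_omegaUp_iff {a r t : ℝ} (ha : 0 ≤ a) (hr : 0 ≤ r) (ht : 0 ≤ t) :
    t ≤ omegaUp a r ↔ t ≤ r ∨ t ^ 2 ≤ a * r := by
  rw [omegaUp, le_max_iff, Real.le_sqrt ht (mul_nonneg ha hr), or_comm]

lemma dSc_le_iff_of_le {a z r : ℝ} (ha : 0 ≤ a) (hr : 0 ≤ r) (hza : z ≤ a) :
    dSc a z ≤ r ↔ a - z ≤ omegaDown a r := by
  rw [dSc_le_iff, le_omegaDown_iff ha hr (sub_nonneg.2 hza), abs_sub_comm,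
    abs_of_nonneg (sub_nonneg.2 hza), min_eq_right hza, sub_sub_cancel, ← neg_sub a z, neg_sq]
  constructor
  · rintro (h | ⟨-, -, h⟩)
    exacts [Or.inl h, Or.inr h]
  · rintro (h | h)
    · exact Or.inl h
    by_cases htr : a - z ≤ r
    · exact Or.inl htr
    have hz : 0 < z :=
      pos_of_mul_pos_right ((pow_pos (by linarith) 2).trans_le h) hr
    exact Or.inr ⟨hz.trans_le hza, hz, h⟩

lemma dSc_le_iff_of_ge {a z r : ℝ} (ha : 0 ≤ a) (hr : 0 ≤ r) (haz : a ≤ z) :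
    dSc a z ≤ r ↔ z - a ≤ omegaUp a r := by
  rw [dSc_le_iff, le_omegaUp_iff ha hr (sub_nonneg.2 haz), abs_of_nonneg (sub_nonneg.2 haz),
    min_eq_left haz, mul_comm r a]
  constructor
  · rintro (h | ⟨-, -, h⟩)
    exacts [Or.inl h, Or.inr h]
  · rintro (h | h)
    · exact Or.inl h
    by_cases htr : z - a ≤ r
    · exact Or.inl htr
    have ha' : 0 < a :=
      pos_of_mul_pos_left ((pow_pos (by linarith) 2).trans_le h) hr
    exact Or.inr ⟨ha', ha'.trans_le haz, h⟩

/-- Explicit description of the "sphere" `B(α,r) = {ζ : d(α,ζ) ≤ r}`: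
`B(α,r) = {ζ : -ω↓(α,r) ≤ ζ - α ≤ ω↑(α,r)}`. -/
theorem ball_d_eq (a r : ℝ) (ha : 0 ≤ a) (hr : 0 < r) :
    {z : ℝ | dSc a z ≤ r} =
      {z : ℝ | -omegaDown a r ≤ z - a ∧ z - a ≤ omegaUp a r} := by
  ext z
  have hDown : r ≤ omegaDown a r := le_max_right _ _
  have hUp : r ≤ omegaUp a r := le_max_right _ _
  rcases le_total z a with hza | haz
  · simp only [Set.mem_ofPred_eq, dSc_le_iff_of_le ha hr.le hza]
    constructor
    · intro h
      constructor <;> linarith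
    · intro h
      linarith [h.1]
  · simp only [Set.mem_ofPred_eq, dSc_le_iff_of_ge ha hr.le haz]
    constructor
    · intro h
      constructor <;> linarith
    · exact And.right
end

section
/- Let X be a finite set with |X| ≥ 2, let α ∈ ℝ^X_{K+} be a probability vector, and let r > 0. Then C(α,r) ⊆ B^K(α,r), where C(α,r) := {ζ ∈ ℝ^X_K : −ω'(α_x,r) ≤ ζ_x − α_x ≤ ω'(α_x,r) for all x ∈ X ∖ {x_max(α)}} and B^K(α,r) := {ζ ∈ ℝ^X_K : −ω↓(α_x,r) ≤ ζ_x − α_x ≤ ω↑(α_x,r) for all x ∈ X}. -/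
open scoped BigOperators

/-- `ω'(α,r) = ω↓(α,r)/(|X| - 1)`, where `k = |X|`. -/
noncomputable def omegaPrime (k : ℕ) (a r : ℝ) : ℝ :=
  omegaDown a r / ((k : ℝ) - 1)

/-! At the maximising coordinate the deviation `ζ xmax - α xmax` is minus the sum of the other
`|X| - 1` deviations, each at most `ω'(α y, r) ≤ ω'(α xmax, r)` in absolute value because `ω↓` is
monotone in `α`; so it is at most `ω↓(α xmax, r)`. The other coordinates satisfy
`|ζ x - α x| ≤ ω' ≤ ω↓` directly, and `ω↓ ≤ ω↑` because
`√(r²/4 + αr) ≤ √(αr) + r/2`. -/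

open Finset

section Omega

variable {a b r : ℝ}

theorem omegaDown_nonneg (hr : 0 ≤ r) : 0 ≤ omegaDown a r :=
  hr.trans (le_max_right _ _)

theorem omegaDown_mono (hr : 0 ≤ r) (hab : a ≤ b) : omegaDown a r ≤ omegaDown b r := by
  unfold omegaDown
  gcongr

theorem sqrt_sq_div_four_add_mul_le (hr : 0 ≤ r) :
    √(r ^ 2 / 4 + a * r) ≤ √(a * r) + r / 2 := by
  have hs : 0 ≤ √(a * r) := Real.sqrt_nonneg _
  rw [Real.sqrt_le_left (by positivity)]
  rcases le_total 0 (a * r) with har | har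
  · nlinarith [Real.sq_sqrt har]
  · nlinarith

theorem omegaDown_le_omegaUp (hr : 0 ≤ r) : omegaDown a r ≤ omegaUp a r := by
  unfold omegaDown omegaUp
  have := sqrt_sq_div_four_add_mul_le (a := a) hr
  exact max_le_max (by linarith) le_rfl

theorem omegaPrime_mono {k : ℕ} (hk : 1 < k) (hr : 0 ≤ r) (hab : a ≤ b) :
    omegaPrime k a r ≤ omegaPrime k b r := by
  have : (1 : ℝ) < k := by exact_mod_cast hk
  exact div_le_div_of_nonneg_right (omegaDown_mono hr hab) (by linarith)

theorem omegaPrime_le_omegaDown {k : ℕ} (hk : 2 ≤ k) (hr : 0 ≤ r) :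
    omegaPrime k a r ≤ omegaDown a r := by
  have : (2 : ℝ) ≤ k := by exact_mod_cast hk
  exact div_le_self (omegaDown_nonneg hr) (by linarith)

end Omega

theorem abs_le_of_sum_eq_zero_of_abs_le_div {X : Type*} [Fintype X] (hX : 2 ≤ Fintype.card X)
    {d : X → ℝ} (hd : ∑ y, d y = 0) (x : X) {c : ℝ}
    (h : ∀ y, y ≠ x → |d y| ≤ c / (Fintype.card X - 1)) : |d x| ≤ c := by
  classical
  have hcard : ((univ.erase x).card : ℝ) = Fintype.card X - 1 := by
    rw [card_erase_of_mem (mem_univ x), card_univ, Nat.cast_sub (by omega), Nat.cast_one]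
  have hX' : (Fintype.card X : ℝ) - 1 ≠ 0 := by
    have : (2 : ℝ) ≤ Fintype.card X := by exact_mod_cast hX
    linarith
  have hx : d x = -∑ y ∈ univ.erase x, d y := by
    rw [sum_erase_eq_sub (mem_univ x), hd]; ring
  calc |d x| ≤ ∑ y ∈ univ.erase x, |d y| := by
        rw [hx, abs_neg]; exact abs_sum_le_sum_abs _ _
    _ ≤ (univ.erase x).card • (c / (Fintype.card X - 1)) :=
        sum_le_card_nsmul _ _ _ fun y hy => h y (ne_of_mem_erase hy)
    _ = c := by rw [nsmul_eq_mul, hcard]; exact mul_div_cancel₀ c hX'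

theorem C_subset_BK_general {X : Type} [Fintype X] (hX : 2 ≤ Fintype.card X)
    (α : X → ℝ) (hα1 : ∑ x, α x = 1)
    (xmax : X) (hmax : ∀ x, α x ≤ α xmax)
    (r : ℝ) (hr : 0 < r) :
    {ζ : X → ℝ | (∑ x, ζ x) = 1 ∧ ∀ x, x ≠ xmax →
        -omegaPrime (Fintype.card X) (α x) r ≤ ζ x - α x ∧
          ζ x - α x ≤ omegaPrime (Fintype.card X) (α x) r} ⊆
      {ζ : X → ℝ | (∑ x, ζ x) = 1 ∧ ∀ x,
        -omegaDown (α x) r ≤ ζ x - α x ∧ ζ x - α x ≤ omegaUp (α x) r} := by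
  rintro ζ ⟨hsum, hC⟩
  have hC' : ∀ x, x ≠ xmax → |ζ x - α x| ≤ omegaPrime (Fintype.card X) (α x) r :=
    fun x hx => abs_le.2 (hC x hx)
  have hdown : ∀ x, |ζ x - α x| ≤ omegaDown (α x) r := by
    intro x
    by_cases hx : x = xmax
    · subst hx
      refine abs_le_of_sum_eq_zero_of_abs_le_div hX (d := fun y => ζ y - α y)
        (by rw [sum_sub_distrib, hsum, hα1, sub_self]) x fun y hy => ?_
      exact (hC' y hy).trans (omegaPrime_mono (by omega) hr.le (hmax y))
    · exact (hC' x hx).trans (omegaPrime_le_omegaDown hX hr.le)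
  refine ⟨hsum, fun x => ⟨(abs_le.1 (hdown x)).1, ?_⟩⟩
  exact (abs_le.1 (hdown x)).2.trans (omegaDown_le_omegaUp hr.le)

/-- **Lemma 2:** `C(α,r) ⊆ B^K(α,r)`. Here `α` is a probability vector on `X`, `xmax` is an
index where `α` attains its maximum, `C(α,r)` constrains all coordinates except `xmax` by
`±ω'`, and `B^K(α,r)` is the intersection of the box `B(α,r)` with the hyperplane of vectors
summing to `1`. -/
theorem C_subset_BK {X : Type} [Fintype X] (hX : 2 ≤ Fintype.card X)
    (α : X → ℝ) (hα0 : ∀ x, 0 ≤ α x) (hα1 : ∑ x, α x = 1)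
    (xmax : X) (hmax : ∀ x, α x ≤ α xmax)
    (r : ℝ) (hr : 0 < r) :
    {ζ : X → ℝ | (∑ x, ζ x) = 1 ∧ ∀ x, x ≠ xmax →
        -omegaPrime (Fintype.card X) (α x) r ≤ ζ x - α x ∧
          ζ x - α x ≤ omegaPrime (Fintype.card X) (α x) r} ⊆
      {ζ : X → ℝ | (∑ x, ζ x) = 1 ∧ ∀ x,
        -omegaDown (α x) r ≤ ζ x - α x ∧ ζ x - α x ≤ omegaUp (α x) r} :=
  C_subset_BK_general hX α hα1 xmax hmax r hr
end

section
/- Let X be a finite set with |X| ≥ 2, let α ∈ ℝ^X_{K+} be a probability vector, and let r > 0. Then the weight of the quadrant Q'(α,r) satisfies ∫_{Q'(α,r)} φ(ζ') dζ' ≥ r^{(|X|−1)/2} · (√(2 + 1/(|X|−1)) − √2)^{|X|−1}. -/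
/-!
On the box `Q'(α,r)` the density `φ` is a product of one-variable densities, so by Fubini the
weight is `∏_{x ∈ X'} (√(α_x + ω'_x) - √α_x)`, as `√t` is a primitive of `1/√(4t)`. Each factor is
at least `√r (√(2 + e) - √2)` with `e = 1/(|X|-1)`: rationalising both differences reduces this to
`√(r α_x) ≤ √2 ω↓` and `√(r (α_x + ω↓ e)) ≤ √(2 + e) ω↓`, which follow from `r ≤ ω↓` and
`α_x r ≤ 2 ω↓²`.
-/

open scoped BigOperators
open MeasureTheory

open Real

theorem integral_Icc_one_div_sqrt_four_mul {a b : ℝ} (ha : 0 ≤ a) (hab : a ≤ b) :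
    ∫ t in Set.Icc a b, 1 / √(4 * t) = √b - √a := by
  have hφ : Set.EqOn (fun t => 1 / √(4 * t)) (fun t => 2⁻¹ * t ^ (-(1 / 2) : ℝ))
      (Set.uIcc a b) := by
    intro t ht
    have ht0 : 0 ≤ t := ha.trans (Set.uIcc_of_le hab ▸ ht).1
    dsimp only
    rw [sqrt_mul zero_le_four, show √4 = 2 by rw [show (4 : ℝ) = 2 ^ 2 by norm_num,
      sqrt_sq zero_le_two], rpow_neg ht0, ← sqrt_eq_rpow, one_div, mul_inv]
  rw [integral_Icc_eq_integral_Ioc, ← intervalIntegral.integral_of_le hab,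
    intervalIntegral.integral_congr hφ, intervalIntegral.integral_const_mul,
    integral_rpow (Or.inl (by norm_num)), sqrt_eq_rpow, sqrt_eq_rpow]
  norm_num
  ring

theorem setIntegral_univ_pi_prod {ι 𝕜 : Type*} [Fintype ι] [RCLike 𝕜] {E : ι → Type*}
    [∀ i, MeasureSpace (E i)] [∀ i, SigmaFinite (volume : Measure (E i))]
    (s : (i : ι) → Set (E i)) (f : (i : ι) → E i → 𝕜) :
    ∫ x in Set.univ.pi s, ∏ i, f i (x i) = ∏ i, ∫ t in s i, f i t := by
  rw [volume_pi, Measure.restrict_pi_pi, integral_fintype_prod_eq_prod]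

theorem le_sqrt_add_mul_sub_sqrt {a r u e : ℝ} (ha : 0 ≤ a) (hr : 0 < r) (he : 0 ≤ e)
    (hru : r ≤ u) (hau : a * r ≤ 2 * u ^ 2) :
    √r * (√(2 + e) - √2) ≤ √(a + u * e) - √a := by
  have hu : 0 < u := hr.trans_le hru
  have hsq_le {x y : ℝ} (hx : 0 ≤ x) (hy : 0 ≤ y) (h : x ^ 2 ≤ y ^ 2) : x ≤ y :=
    (pow_le_pow_iff_left₀ hx hy two_ne_zero).mp h
  have hp : √r * √a ≤ u * √2 := hsq_le (by positivity) (by positivity) (by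
    rw [mul_pow, mul_pow, sq_sqrt hr.le, sq_sqrt ha, sq_sqrt zero_le_two]; linarith)
  have hq : √r * √(a + u * e) ≤ u * √(2 + e) := hsq_le (by positivity) (by positivity) (by
    rw [mul_pow, mul_pow, sq_sqrt hr.le, sq_sqrt (by positivity), sq_sqrt (by positivity)]
    nlinarith [mul_le_mul_of_nonneg_right hru (mul_nonneg hu.le he)])
  -- rationalise: both differences are quotients by the corresponding sums of square roots
  have hqp : (√(a + u * e) - √a) * (√(a + u * e) + √a) = u * e := by
    linear_combination sq_sqrt (by positivity : 0 ≤ a + u * e) - sq_sqrt ha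
  have hvw : (√(2 + e) - √2) * (√(2 + e) + √2) = e := by
    linear_combination sq_sqrt (by positivity : (0 : ℝ) ≤ 2 + e) - sq_sqrt zero_le_two
  have hgap : 0 ≤ √(a + u * e) - √a :=
    sub_nonneg.mpr (sqrt_le_sqrt (le_add_of_nonneg_right (by positivity)))
  have hsum : 0 < u * (√(2 + e) + √2) := by positivity
  refine le_of_mul_le_mul_right ?_ hsum
  calc √r * (√(2 + e) - √2) * (u * (√(2 + e) + √2))
      = (√(a + u * e) - √a) * (√r * (√(a + u * e) + √a)) := by
        linear_combination (u * √r) * hvw - √r * hqp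
    _ ≤ (√(a + u * e) - √a) * (u * (√(2 + e) + √2)) :=
        mul_le_mul_of_nonneg_left (by linarith) hgap

theorem mul_le_two_mul_omegaDown_sq {a r : ℝ} (ha : 0 ≤ a) (hr : 0 ≤ r) :
    a * r ≤ 2 * omegaDown a r ^ 2 := by
  set u := √(r ^ 2 / 4 + a * r) - r / 2
  -- `u` is the positive root of `u² + r u = a r`
  have hroot : u * (u + r) = a * r := by
    linear_combination sq_sqrt (by positivity : 0 ≤ r ^ 2 / 4 + a * r)
  have hu : 0 ≤ u := sub_nonneg.mpr (le_sqrt_of_sq_le (by nlinarith))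
  have huω : u ≤ omegaDown a r := le_max_left _ _
  have hrω : r ≤ omegaDown a r := le_max_right _ _
  rw [← hroot]
  nlinarith

theorem le_sqrt_add_omegaPrime_sub_sqrt {k : ℕ} (hk : 1 ≤ k) {a r : ℝ} (ha : 0 ≤ a)
    (hr : 0 < r) :
    √r * (√(2 + 1 / ((k : ℝ) - 1)) - √2) ≤ √(a + omegaPrime k a r) - √a := by
  have hN : (0 : ℝ) ≤ k - 1 := sub_nonneg.mpr (by exact_mod_cast hk)
  rw [omegaPrime, div_eq_mul_one_div (omegaDown a r)]
  exact le_sqrt_add_mul_sub_sqrt ha hr (one_div_nonneg.mpr hN)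
    (le_max_right _ _) (mul_le_two_mul_omegaDown_sq ha hr.le)

theorem quadrant_weight_lower_bound_general {X : Type} [Fintype X] [DecidableEq X]
    (α : X → ℝ) (hα0 : ∀ x, 0 ≤ α x)
    (xmax : X)
    (r : ℝ) (hr : 0 < r) :
    r ^ (((Fintype.card X : ℝ) - 1) / 2) *
        (Real.sqrt (2 + 1 / ((Fintype.card X : ℝ) - 1)) - Real.sqrt 2) ^
          (Fintype.card X - 1) ≤
      ∫ ζ : {x : X // x ≠ xmax} → ℝ in
        {ζ | ∀ x : {x : X // x ≠ xmax},
          0 ≤ ζ x - α x.1 ∧ ζ x - α x.1 ≤ omegaPrime (Fintype.card X) (α x.1) r},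
        ∏ x, 1 / Real.sqrt (4 * ζ x) := by
  set k := Fintype.card X
  have hk : 1 ≤ k := Fintype.card_pos_iff.mpr ⟨xmax⟩
  have hN : (0 : ℝ) ≤ k - 1 := sub_nonneg.mpr (by exact_mod_cast hk)
  have hQ : {ζ : {x : X // x ≠ xmax} → ℝ | ∀ x,
        0 ≤ ζ x - α x.1 ∧ ζ x - α x.1 ≤ omegaPrime k (α x.1) r} =
      Set.univ.pi fun x => Set.Icc (α x.1) (α x.1 + omegaPrime k (α x.1) r) := by
    ext ζ
    simp only [Set.mem_ofPred_eq, Set.mem_univ_pi, Set.mem_Icc, sub_nonneg, sub_le_iff_le_add']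
  have hlhs : r ^ (((k : ℝ) - 1) / 2) * (√(2 + 1 / ((k : ℝ) - 1)) - √2) ^ (k - 1) =
      ∏ _x : {x : X // x ≠ xmax}, √r * (√(2 + 1 / ((k : ℝ) - 1)) - √2) := by
    rw [rpow_div_two_eq_sqrt _ hr.le, ← Nat.cast_pred hk, rpow_natCast, ← mul_pow,
      Finset.prod_const, Finset.card_univ, Fintype.card_subtype_compl, Fintype.card_subtype_eq]
  rw [hQ, setIntegral_univ_pi_prod _ fun _ t => 1 / √(4 * t), hlhs]
  refine Finset.prod_le_prod (fun _ _ => ?_) fun x _ => ?_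
  · exact mul_nonneg (sqrt_nonneg r)
      (sub_nonneg.mpr (sqrt_le_sqrt (le_add_of_nonneg_right (one_div_nonneg.mpr hN))))
  · have hω : 0 ≤ omegaPrime k (α x.1) r :=
      div_nonneg (hr.le.trans (le_max_right _ _)) hN
    rw [integral_Icc_one_div_sqrt_four_mul (hα0 x.1) (le_add_of_nonneg_right hω)]
    exact le_sqrt_add_omegaPrime_sub_sqrt hk (hα0 x.1) hr

/-- **Lemma 4:** the weight `∫_{Q'(α,r)} φ dζ'` of the quadrant `Q'(α,r) ⊆ ℝ^{X'}`
(with density `φ(ζ') = ∏_x 1/√(4ζ_x)`) is at least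
`r^{(|X|-1)/2} (√(2 + 1/(|X|-1)) - √2)^{|X|-1}`. -/
theorem quadrant_weight_lower_bound {X : Type} [Fintype X] [DecidableEq X]
    (hX : 2 ≤ Fintype.card X)
    (α : X → ℝ) (hα0 : ∀ x, 0 ≤ α x) (hα1 : ∑ x, α x = 1)
    (xmax : X) (hmax : ∀ x, α x ≤ α xmax)
    (r : ℝ) (hr : 0 < r) :
    r ^ (((Fintype.card X : ℝ) - 1) / 2) *
        (Real.sqrt (2 + 1 / ((Fintype.card X : ℝ) - 1)) - Real.sqrt 2) ^
          (Fintype.card X - 1) ≤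
      ∫ ζ : {x : X // x ≠ xmax} → ℝ in
        {ζ | ∀ x : {x : X // x ≠ xmax},
          0 ≤ ζ x - α x.1 ∧ ζ x - α x.1 ≤ omegaPrime (Fintype.card X) (α x.1) r},
        ∏ x, 1 / Real.sqrt (4 * ζ x) :=
  quadrant_weight_lower_bound_general α hα0 xmax r hr
end

section
/- Let X be a finite set with |X| ≥ 2, let r > 0, and define ψ_r(α) := √(α + ω'(α,r)) − √α for α ≥ 0, where ω'(α,r) := ω↓(α,r)/(|X|−1) and ω↓(α,r) := max(√(r²/4 + αr) − r/2, r). Then ψ_r is decreasing on [0, 2r) and increasing on [2r, ∞), so ψ_r attains its minimum at α = 2r; in particular ψ_r(α) ≥ ψ_r(2r) = √r · (√(2 + 1/(|X|−1)) − √2) for all α ≥ 0. -/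
/-- `ψ_r(α) = √(α + ω'(α,r)) - √α`. -/
noncomputable def psi (k : ℕ) (r a : ℝ) : ℝ :=
  Real.sqrt (a + omegaPrime k a r) - Real.sqrt a

/-!
On `[0, 2r]` the maximum defining `ω↓` is `r`, so with `e = r / (|X| - 1)`,
`ψ_r(α) = √(α + e) - √α = e / (√(α + e) + √α)`, which decreases in `α`. From `2r` on,
`ω = ω↓(α, r)` is the positive root of `ω² + rω = αr` and increases with `α`; substituting
`α = (ω² + rω) / r` gives, with `p = r + e`,
`√r · ψ_r(α) = √(ω² + pω) - √(ω² + rω) = (p - r) / (√(1 + p/ω) + √(1 + r/ω))`,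
which increases with `ω`.
-/

open Real Set

lemma sqrt_add_sub_sqrt {x e : ℝ} (hx : 0 ≤ x) (he : 0 < e) :
    √(x + e) - √x = e / (√(x + e) + √x) := by
  have hxe : 0 ≤ x + e := by linarith
  have hpos : 0 < √(x + e) + √x := by positivity
  rw [eq_div_iff hpos.ne']
  linear_combination sq_sqrt hxe - sq_sqrt hx

lemma strictAntiOn_sqrt_add_sub_sqrt {e : ℝ} (he : 0 < e) :
    StrictAntiOn (fun x => √(x + e) - √x) (Ici 0) := by
  intro x hx y hy hxy
  simp only
  rw [sqrt_add_sub_sqrt hx he, sqrt_add_sub_sqrt hy he]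
  have hxe : 0 < x + e := by linarith [mem_Ici.1 hx]
  apply div_lt_div_of_pos_left he (by positivity)
  exact add_lt_add_of_lt_of_le (sqrt_lt_sqrt hxe.le (by linarith)) (sqrt_le_sqrt hxy.le)

lemma sqrt_sq_add_mul_sub_sqrt_sq_add_mul {u p q : ℝ} (hu : 0 < u) (hq : 0 ≤ q) (hqp : q < p) :
    √(u ^ 2 + p * u) - √(u ^ 2 + q * u) = (p - q) / (√(1 + p / u) + √(1 + q / u)) := by
  have hscale : ∀ s : ℝ, √(u ^ 2 + s * u) = u * √(1 + s / u) := fun s => by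
    rw [show u ^ 2 + s * u = u ^ 2 * (1 + s / u) by field_simp, sqrt_mul (sq_nonneg u),
      sqrt_sq hu.le]
  rw [hscale, hscale, ← mul_sub, show 1 + p / u = 1 + q / u + (p - q) / u by ring,
    sqrt_add_sub_sqrt (by positivity) (div_pos (sub_pos.2 hqp) hu)]
  field_simp

lemma strictMonoOn_sqrt_sq_add_mul_sub_sqrt_sq_add_mul {p q : ℝ} (hq : 0 ≤ q) (hqp : q < p) :
    StrictMonoOn (fun u => √(u ^ 2 + p * u) - √(u ^ 2 + q * u)) (Ioi 0) := by
  intro u hu v hv huv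
  have hu : 0 < u := hu
  have hv : 0 < v := hv
  simp only
  rw [sqrt_sq_add_mul_sub_sqrt_sq_add_mul hu hq hqp, sqrt_sq_add_mul_sub_sqrt_sq_add_mul hv hq hqp]
  apply div_lt_div_of_pos_left (sub_pos.2 hqp) (by positivity)
  have hp : 0 < p := hq.trans_lt hqp
  exact add_lt_add_of_lt_of_le
    (sqrt_lt_sqrt (by positivity) (by linarith [div_lt_div_of_pos_left hp hu huv]))
    (sqrt_le_sqrt (by linarith [div_le_div_of_nonneg_left hq hu huv.le]))

/-- The nonnegative root `ω` of `ω² + rω = αr`; `omegaDown a r = max (omegaRoot a r) r`. -/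
noncomputable def omegaRoot (a r : ℝ) : ℝ :=
  √(r ^ 2 / 4 + a * r) - r / 2

section omegaRoot

variable {a r : ℝ}

lemma omegaRoot_sq_add_mul (ha : 0 ≤ a) (hr : 0 ≤ r) :
    omegaRoot a r ^ 2 + r * omegaRoot a r = a * r := by
  have h : 0 ≤ r ^ 2 / 4 + a * r := by positivity
  unfold omegaRoot
  linear_combination sq_sqrt h

lemma omegaRoot_two_mul (hr : 0 ≤ r) : omegaRoot (2 * r) r = r := by
  rw [omegaRoot, show r ^ 2 / 4 + 2 * r * r = (3 / 2 * r) ^ 2 by ring, sqrt_sq (by positivity)]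
  ring

lemma strictMonoOn_omegaRoot (hr : 0 < r) : StrictMonoOn (omegaRoot · r) (Ici 0) := by
  intro x hx y _ hxy
  have hx : 0 ≤ x := hx
  simp only [omegaRoot, sub_lt_sub_iff_right]
  exact sqrt_lt_sqrt (by positivity) (by nlinarith)

lemma omegaRoot_le (hr : 0 < r) (ha : 0 ≤ a) (ha' : a ≤ 2 * r) : omegaRoot a r ≤ r :=
  ((strictMonoOn_omegaRoot hr).monotoneOn ha (by simp [hr.le]) ha').trans_eq
    (omegaRoot_two_mul hr.le)

lemma le_omegaRoot (hr : 0 < r) (ha : 2 * r ≤ a) : r ≤ omegaRoot a r :=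
  (omegaRoot_two_mul hr.le).symm.trans_le
    ((strictMonoOn_omegaRoot hr).monotoneOn (by simp [hr.le]) (by simp; linarith) ha)

lemma omegaDown_of_le_two_mul (hr : 0 < r) (ha : 0 ≤ a) (ha' : a ≤ 2 * r) :
    omegaDown a r = r :=
  max_eq_right (omegaRoot_le hr ha ha')

lemma omegaDown_of_two_mul_le (hr : 0 < r) (ha : 2 * r ≤ a) : omegaDown a r = omegaRoot a r :=
  max_eq_left (le_omegaRoot hr ha)

end omegaRoot

section psi

variable {k : ℕ} {a r : ℝ}

lemma psi_of_le_two_mul (hr : 0 < r) (ha : 0 ≤ a) (ha' : a ≤ 2 * r) :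
    psi k r a = √(a + r / (k - 1)) - √a := by
  rw [psi, omegaPrime, omegaDown_of_le_two_mul hr ha ha']

lemma psi_of_two_mul_le (hr : 0 < r) (ha : 2 * r ≤ a) :
    psi k r a = (√(omegaRoot a r ^ 2 + (r + r / (k - 1)) * omegaRoot a r)
      - √(omegaRoot a r ^ 2 + r * omegaRoot a r)) / √r := by
  have hw := omegaRoot_sq_add_mul (by linarith) hr.le
  set w := omegaRoot a r
  have ha_eq : a = (w ^ 2 + r * w) / r := by
    rw [eq_div_iff hr.ne']; linear_combination -hw
  have hshift_eq : a + w / (k - 1) = (w ^ 2 + (r + r / (k - 1)) * w) / r := by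
    rw [eq_div_iff hr.ne']; linear_combination -hw
  rw [psi, omegaPrime, omegaDown_of_two_mul_le hr ha, hshift_eq, sqrt_div' _ hr.le, ha_eq,
    sqrt_div' _ hr.le, sub_div]

lemma psi_two_mul (hr : 0 < r) :
    psi k r (2 * r) = √r * (√(2 + 1 / ((k : ℝ) - 1)) - √2) := by
  rw [psi_of_le_two_mul hr (by positivity) le_rfl, mul_sub, ← sqrt_mul hr.le, ← sqrt_mul hr.le]
  ring_nf

lemma div_natCast_sub_one_pos (hk : 2 ≤ k) (hr : 0 < r) : 0 < r / ((k : ℝ) - 1) :=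
  div_pos hr (by linarith [show (2 : ℝ) ≤ k by exact_mod_cast hk])

lemma strictAntiOn_psi (hk : 2 ≤ k) (hr : 0 < r) : StrictAntiOn (psi k r) (Icc 0 (2 * r)) := by
  have he := div_natCast_sub_one_pos hk hr
  exact ((strictAntiOn_sqrt_add_sub_sqrt he).mono Icc_subset_Ici_self).congr
    fun a ha => (psi_of_le_two_mul hr ha.1 ha.2).symm

lemma strictMonoOn_psi (hk : 2 ≤ k) (hr : 0 < r) : StrictMonoOn (psi k r) (Ici (2 * r)) := by
  have he := div_natCast_sub_one_pos hk hr
  have hsub : Ici (2 * r) ⊆ Ici 0 := Ici_subset_Ici.2 (by positivity)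
  have hpos : MapsTo (omegaRoot · r) (Ici (2 * r)) (Ioi 0) := fun a ha =>
    hr.trans_le (le_omegaRoot hr ha)
  intro x hx y hy hxy
  rw [psi_of_two_mul_le hr hx, psi_of_two_mul_le hr hy]
  refine div_lt_div_of_pos_right ?_ (sqrt_pos.2 hr)
  exact (strictMonoOn_sqrt_sq_add_mul_sub_sqrt_sq_add_mul hr.le (lt_add_of_pos_right r he)).comp
    ((strictMonoOn_omegaRoot hr).mono hsub) hpos hx hy hxy

end psi

/-- `ψ_r` is decreasing on `[0, 2r)` and increasing on `[2r, ∞)`, hence attains its minimum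
at `α = 2r`; in particular `ψ_r(α) ≥ ψ_r(2r) = √r (√(2 + 1/(|X|-1)) - √2)` for all `α ≥ 0`. -/
theorem psi_min_at_two_r {X : Type} [Fintype X] (hX : 2 ≤ Fintype.card X)
    (r : ℝ) (hr : 0 < r) :
    StrictAntiOn (psi (Fintype.card X) r) (Set.Ico 0 (2 * r)) ∧
    StrictMonoOn (psi (Fintype.card X) r) (Set.Ici (2 * r)) ∧
    (∀ a : ℝ, 0 ≤ a → psi (Fintype.card X) r (2 * r) ≤ psi (Fintype.card X) r a) ∧
    psi (Fintype.card X) r (2 * r) =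
      Real.sqrt r * (Real.sqrt (2 + 1 / ((Fintype.card X : ℝ) - 1)) - Real.sqrt 2) := by
  have hanti := strictAntiOn_psi hX hr
  have hmono := strictMonoOn_psi hX hr
  refine ⟨hanti.mono Ico_subset_Icc_self, hmono, fun a ha => ?_, psi_two_mul hr⟩
  rcases le_total a (2 * r) with h | h
  · exact hanti.antitoneOn ⟨ha, h⟩ ⟨by positivity, le_rfl⟩ h
  · exact hmono.monotoneOn (mem_Ici.2 le_rfl) h h
end

section
/- Let X be a finite set with |X| ≥ 2, fix x_max ∈ X with X' := X ∖ {x_max}, and let 0 < r ≤ 1. Then V' ⊆ U', where V' := ∪ { Q'(α,r) : α ∈ ℝ^X_{K+}, x_max(α) = x_max } and U' := {ζ' ∈ ℝ^{X'} : Σ_{x∈X'} ζ_x ≤ 2 and ζ_x ≥ 0 for all x ∈ X'}. -/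
/-! Each coordinate of `ζ` exceeds `α x` by at most `ω'(α x, r) = ω↓(α x, r) / (|X| - 1)`, and
`ω↓(a, r) ≤ 1` for `a ≤ 1` and `0 ≤ r ≤ 1`, so the `|X| - 1` excesses add up to at most `1`; the entries
`α x` with `x ≠ xmax` add up to at most `∑ α = 1`. -/

open scoped BigOperators

lemma omegaDown_le_one {a r : ℝ} (ha : a ≤ 1) (hr0 : 0 ≤ r) (hr1 : r ≤ 1) :
    omegaDown a r ≤ 1 := by
  refine max_le ?_ hr1
  have hsq : r ^ 2 / 4 + a * r ≤ (1 + r / 2) ^ 2 := by nlinarith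
  have := (Real.sqrt_le_sqrt hsq).trans_eq (Real.sqrt_sq (by linarith : 0 ≤ 1 + r / 2))
  linarith

lemma sum_omegaPrime_card_succ_le_one {ι : Type*} [Fintype ι] {a : ι → ℝ} {r : ℝ}
    (ha : ∀ i, a i ≤ 1) (hr0 : 0 ≤ r) (hr1 : r ≤ 1) :
    ∑ i, omegaPrime (Fintype.card ι + 1) (a i) r ≤ 1 := by
  have hn : (0 : ℝ) ≤ Fintype.card ι := Nat.cast_nonneg _
  calc ∑ i, omegaPrime (Fintype.card ι + 1) (a i) r
      ≤ ∑ _i : ι, 1 / (Fintype.card ι : ℝ) := by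
        refine Finset.sum_le_sum fun i _ => ?_
        rw [omegaPrime, Nat.cast_succ, add_sub_cancel_right]
        gcongr
        exact omegaDown_le_one (ha i) hr0 hr1
    _ = (Fintype.card ι : ℝ) * (1 / Fintype.card ι) := by
        rw [Finset.sum_const, Finset.card_univ, nsmul_eq_mul]
    _ ≤ 1 := by
        rcases hn.eq_or_lt with h | h
        · simp [← h]
        · rw [mul_one_div_cancel h.ne']

lemma sum_subtype_ne_le_sum {X : Type*} [Fintype X] [DecidableEq X] {α : X → ℝ}
    (hα : ∀ x, 0 ≤ α x) (xmax : X) :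
    ∑ x : {x : X // x ≠ xmax}, α x ≤ ∑ x, α x := by
  rw [Fintype.sum_eq_add_sum_subtype_ne α xmax]
  linarith [hα xmax]

lemma card_subtype_ne_add_one {X : Type*} [Fintype X] [DecidableEq X] (xmax : X) :
    Fintype.card {x : X // x ≠ xmax} + 1 = Fintype.card X := by
  rw [Fintype.card_subtype_compl, Fintype.card_subtype_eq]
  exact Nat.sub_add_cancel (Fintype.card_pos_iff.mpr ⟨xmax⟩)

theorem V_subset_U_general {X : Type} [Fintype X] [DecidableEq X]
    (xmax : X) (r : ℝ) (hr0 : 0 < r) (hr1 : r ≤ 1) :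
    {ζ : {x : X // x ≠ xmax} → ℝ | ∃ α : X → ℝ,
        (∀ x, 0 ≤ α x) ∧ (∑ x, α x = 1) ∧ (∀ x, α x ≤ α xmax) ∧
        ∀ x : {x : X // x ≠ xmax},
          0 ≤ ζ x - α x.1 ∧ ζ x - α x.1 ≤ omegaPrime (Fintype.card X) (α x.1) r} ⊆
      {ζ : {x : X // x ≠ xmax} → ℝ | (∑ x, ζ x) ≤ 2 ∧ ∀ x, 0 ≤ ζ x} := by
  rintro ζ ⟨α, hα0, hαsum, -, hq⟩
  have hα1 : ∀ x, α x ≤ 1 := fun x =>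
    hαsum ▸ Finset.single_le_sum (fun y _ => hα0 y) (Finset.mem_univ x)
  have hω : ∑ x : {x : X // x ≠ xmax}, omegaPrime (Fintype.card X) (α x) r ≤ 1 := by
    rw [← card_subtype_ne_add_one xmax]
    exact sum_omegaPrime_card_succ_le_one (fun x => hα1 x) hr0.le hr1
  have hα : ∑ x : {x : X // x ≠ xmax}, α x ≤ 1 := hαsum ▸ sum_subtype_ne_le_sum hα0 xmax
  refine ⟨?_, fun x => by linarith [(hq x).1, hα0 x]⟩
  calc ∑ x, ζ x ≤ ∑ x : {x : X // x ≠ xmax}, (α x + omegaPrime (Fintype.card X) (α x) r) :=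
        Finset.sum_le_sum fun x _ => by linarith [(hq x).2]
    _ ≤ 2 := by rw [Finset.sum_add_distrib]; linarith

/-- **Lemma 5:** for `0 < r ≤ 1`, the union `V'` of all quadrants `Q'(α,r)` over probability
vectors `α` maximized at `xmax` is contained in
`U' = {ζ' : ∑_{x ∈ X'} ζ_x ≤ 2, ζ_x ≥ 0}`. -/
theorem V_subset_U {X : Type} [Fintype X] [DecidableEq X] (hX : 2 ≤ Fintype.card X)
    (xmax : X) (r : ℝ) (hr0 : 0 < r) (hr1 : r ≤ 1) :
    {ζ : {x : X // x ≠ xmax} → ℝ | ∃ α : X → ℝ,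
        (∀ x, 0 ≤ α x) ∧ (∑ x, α x = 1) ∧ (∀ x, α x ≤ α xmax) ∧
        ∀ x : {x : X // x ≠ xmax},
          0 ≤ ζ x - α x.1 ∧ ζ x - α x.1 ≤ omegaPrime (Fintype.card X) (α x.1) r} ⊆
      {ζ : {x : X // x ≠ xmax} → ℝ | (∑ x, ζ x) ≤ 2 ∧ ∀ x, 0 ≤ ζ x} :=
  V_subset_U_general xmax r hr0 hr1
end
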